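/- Let T = Σ_{i=1}^q Q_i⟦t_i⟧ ∈ 𝒜_Q(ℝⁿ) with the t_i pairwise distinct and Σ_{i=1}^q Q_i = Q, and let 0 < ε < 1/8. If S, S' ∈ 𝒜_Q(ℝⁿ) both have support contained in 𝒫_ε(T) and are both balanced with respect to T and ε, with natural splittings S = Σ_{i=1}^q S_i and S' = Σ_{i=1}^q S'_i, then 𝒢(S,S')² = Σ_{i=1}^q 𝒢(S_i, S'_i)². -/
import Mathlib


open scoped BigOperators

/-- The distance `𝒢` on the space of `Q`-points, defined on labelings of the points
(indexed by an arbitrary finite type `ι`): the minimum over permutations of the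
square root of the sum of squared distances. -/
noncomputable def Gdist {ι : Type*} [Fintype ι] {n : ℕ}
    (p s : ι → EuclideanSpace ℝ (Fin n)) : ℝ :=
  ⨅ σ : Equiv.Perm ι, Real.sqrt (∑ i, dist (p i) (s (σ i)) ^ 2)

/-- `rsep t i = min_{j ≠ i} |t i - t j|`, the quantity `r_i(T)` for the distinct
points `t_1, …, t_q` of `T`. -/
noncomputable def rsep {n q : ℕ} (t : Fin q → EuclideanSpace ℝ (Fin n)) (i : Fin q) : ℝ :=
  ⨅ j : {j : Fin q // j ≠ i}, dist (t i) (t (j : Fin q))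

section helpers

variable {ι : Type*} [Fintype ι] {n : ℕ} (p s : ι → EuclideanSpace ℝ (Fin n))

lemma Gdist_le (σ : Equiv.Perm ι) :
    Gdist p s ≤ Real.sqrt (∑ i, dist (p i) (s (σ i)) ^ 2) :=
  ciInf_le ⟨0, by rintro _ ⟨τ, rfl⟩; positivity⟩ σ

lemma Gdist_nonneg : 0 ≤ Gdist p s :=
  le_ciInf fun _ => Real.sqrt_nonneg _

lemma exists_Gdist_eq :
    ∃ σ : Equiv.Perm ι, Gdist p s ^ 2 = ∑ i, dist (p i) (s (σ i)) ^ 2 := by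
  obtain ⟨σ₀, hσ₀⟩ := Finite.exists_min
    (fun σ : Equiv.Perm ι => Real.sqrt (∑ i, dist (p i) (s (σ i)) ^ 2))
  refine ⟨σ₀, ?_⟩
  have h : Gdist p s = Real.sqrt (∑ i, dist (p i) (s (σ₀ i)) ^ 2) :=
    le_antisymm (Gdist_le p s σ₀) (le_ciInf hσ₀)
  rw [h, Real.sq_sqrt (by positivity)]

lemma Gdist_sq_le (σ : Equiv.Perm ι) :
    Gdist p s ^ 2 ≤ ∑ i, dist (p i) (s (σ i)) ^ 2 := by
  have h := Gdist_le p s σ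
  have h0 := Gdist_nonneg p s
  calc Gdist p s ^ 2 ≤ Real.sqrt (∑ i, dist (p i) (s (σ i)) ^ 2) ^ 2 :=
        pow_le_pow_left₀ h0 h 2
    _ = _ := Real.sq_sqrt (by positivity)

end helpers

lemma rsep_le {n q : ℕ} (t : Fin q → EuclideanSpace ℝ (Fin n)) {i j : Fin q} (h : j ≠ i) :
    rsep t i ≤ dist (t i) (t j) := by
  have : Nonempty {j : Fin q // j ≠ i} := ⟨⟨j, h⟩⟩
  exact ciInf_le ⟨0, by rintro _ ⟨k, rfl⟩; positivity⟩ (⟨j, h⟩ : {j : Fin q // j ≠ i})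

lemma heq_fin_cast {m k : ℕ} (h : m = k) (a : Fin m) : HEq a (Fin.cast h a) := by
  subst h; rfl

set_option maxHeartbeats 1600000 in
/-- Let `T = Σ_{i=1}^q Q_i⟦t_i⟧` with the `t_i` pairwise distinct and
`Σ Q_i = Q`, and `0 < ε < 1/8`. If `S, S' ∈ 𝒜_Q(ℝⁿ)` both have support contained in
`𝒫_ε(T)` and are both balanced with respect to `T` and `ε` (encoded by indexing the
points of `S` and `S'` by `Σ i, Fin (Q_i)`, the `i`-th block lying in `B_{ε r_i}(t_i)`),
with natural splittings `S = Σ S_i`, `S' = Σ S'_i`, then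
`𝒢(S,S')² = Σ_i 𝒢(S_i, S'_i)²`. -/
theorem stmt1 (n Q q : ℕ) (ε : ℝ) (hε0 : 0 < ε) (hε : ε < 1 / 8)
    (t : Fin q → EuclideanSpace ℝ (Fin n)) (ht : Function.Injective t)
    (Qi : Fin q → ℕ) (hQi : ∀ i, 0 < Qi i) (hQ : ∑ i, Qi i = Q)
    (S S' : (Σ i : Fin q, Fin (Qi i)) → EuclideanSpace ℝ (Fin n))
    (hS : ∀ x : Σ i : Fin q, Fin (Qi i), dist (S x) (t x.1) < ε * rsep t x.1)
    (hS' : ∀ x : Σ i : Fin q, Fin (Qi i), dist (S' x) (t x.1) < ε * rsep t x.1) :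
    Gdist S S' ^ 2
      = ∑ i : Fin q,
          Gdist (fun j : Fin (Qi i) => S ⟨i, j⟩) (fun j : Fin (Qi i) => S' ⟨i, j⟩) ^ 2 := by
  classical
  have hsum : ∀ F : (Σ i : Fin q, Fin (Qi i)) → ℝ,
      ∑ x : Σ i : Fin q, Fin (Qi i), F x = ∑ i : Fin q, ∑ j : Fin (Qi i), F ⟨i, j⟩ := by
    intro F
    rw [← Finset.univ_sigma_univ, Finset.sum_sigma]
  have hr_pos : ∀ i : Fin q, 0 < rsep t i := by
    intro i
    nlinarith [hS ⟨i, ⟨0, hQi i⟩⟩, dist_nonneg (x := S ⟨i, ⟨0, hQi i⟩⟩) (y := t i)]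
  refine le_antisymm ?_ ?_
  · -- easy direction: combine per-block optimal permutations
    choose σi hσi using fun i : Fin q =>
      exists_Gdist_eq (fun j : Fin (Qi i) => S ⟨i, j⟩) (fun j : Fin (Qi i) => S' ⟨i, j⟩)
    calc Gdist S S' ^ 2
        ≤ ∑ x : Σ i : Fin q, Fin (Qi i),
            dist (S x) (S' (Equiv.sigmaCongrRight σi x)) ^ 2 := Gdist_sq_le S S' _
      _ = ∑ i : Fin q, ∑ j : Fin (Qi i), dist (S ⟨i, j⟩) (S' ⟨i, σi i j⟩) ^ 2 := by
          rw [hsum]; rfl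
      _ = ∑ i : Fin q,
          Gdist (fun j : Fin (Qi i) => S ⟨i, j⟩) (fun j : Fin (Qi i) => S' ⟨i, j⟩) ^ 2 :=
          Finset.sum_congr rfl fun i _ => (hσi i).symm
  · -- hard direction
    obtain ⟨σ, hσ⟩ := exists_Gdist_eq S S'
    rw [hσ]
    -- cardinality matching of crossing sets
    have hcard : ∀ i : Fin q,
        (Finset.univ.filter
          (fun x : Σ i : Fin q, Fin (Qi i) => x.1 = i ∧ ¬(σ x).1 = x.1)).card
        = (Finset.univ.filter
          (fun y : Σ i : Fin q, Fin (Qi i) => y.1 = i ∧ ¬(σ.symm y).1 = y.1)).card := by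
      intro i
      have hW : ((Finset.univ.filter (fun x : Σ i : Fin q, Fin (Qi i) => x.1 = i)).filter
            (fun x => (σ x).1 = x.1)).card
          = ((Finset.univ.filter (fun x : Σ i : Fin q, Fin (Qi i) => x.1 = i)).filter
            (fun y => (σ.symm y).1 = y.1)).card := by
        apply Finset.card_nbij' (i := fun x => σ x) (j := fun y => σ.symm y)
        · intro a ha
          simp only [Finset.mem_coe, Finset.mem_filter, Finset.mem_univ, true_and] at ha ⊢
          exact ⟨ha.2.trans ha.1, by rw [Equiv.symm_apply_apply]; exact ha.2.symm⟩
        · intro b hb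
          simp only [Finset.mem_coe, Finset.mem_filter, Finset.mem_univ, true_and] at hb ⊢
          exact ⟨hb.2.trans hb.1, by rw [Equiv.apply_symm_apply]; exact hb.2.symm⟩
        · intro a _; exact σ.symm_apply_apply a
        · intro b _; exact σ.apply_symm_apply b
      have hsplit1 := Finset.card_filter_add_card_filter_not
        (s := Finset.univ.filter (fun x : Σ i : Fin q, Fin (Qi i) => x.1 = i))
        (fun x => (σ x).1 = x.1)
      have hsplit2 := Finset.card_filter_add_card_filter_not
        (s := Finset.univ.filter (fun x : Σ i : Fin q, Fin (Qi i) => x.1 = i))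
        (fun y => (σ.symm y).1 = y.1)
      simp only [Finset.filter_filter] at hsplit1 hsplit2 hW
      omega
    -- the rebalancing map g
    have hmemC : ∀ (x : Σ i : Fin q, Fin (Qi i)), ¬(σ x).1 = x.1 →
        x ∈ Finset.univ.filter
          (fun z : Σ i : Fin q, Fin (Qi i) => z.1 = x.1 ∧ ¬(σ z).1 = z.1) := by
      intro x h
      exact Finset.mem_filter.mpr ⟨Finset.mem_univ _, rfl, h⟩
    let e : ∀ i : Fin q,
        {x // x ∈ Finset.univ.filter
          (fun x : Σ i : Fin q, Fin (Qi i) => x.1 = i ∧ ¬(σ x).1 = x.1)}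
        ≃ {y // y ∈ Finset.univ.filter
          (fun y : Σ i : Fin q, Fin (Qi i) => y.1 = i ∧ ¬(σ.symm y).1 = y.1)} :=
      fun i => Finset.equivOfCardEq (hcard i)
    let g : (Σ i : Fin q, Fin (Qi i)) → (Σ i : Fin q, Fin (Qi i)) := fun x =>
      if h : (σ x).1 = x.1 then σ x else ((e x.1) ⟨x, hmemC x h⟩ : _).1
    have hgpos : ∀ x, ∀ h : (σ x).1 = x.1, g x = σ x := fun x h => dif_pos h
    have hgD : ∀ x, ∀ _ : ¬(σ x).1 = x.1,
        (g x).1 = x.1 ∧ ¬(σ.symm (g x)).1 = (g x).1 := by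
      intro x h
      have hm := ((e x.1) ⟨x, hmemC x h⟩).2
      simp only [Finset.mem_filter, Finset.mem_univ, true_and] at hm
      have hgx : g x = ((e x.1) ⟨x, hmemC x h⟩ : _).1 := dif_neg h
      rw [hgx]
      exact hm
    have hg_fst : ∀ x, (g x).1 = x.1 := by
      intro x
      by_cases h : (σ x).1 = x.1
      · rw [hgpos x h]; exact h
      · exact (hgD x h).1
    have hg_inj : Function.Injective g := by
      intro a b hab
      by_cases ha : (σ a).1 = a.1 <;> by_cases hb : (σ b).1 = b.1
      · exact σ.injective (by rw [← hgpos a ha, ← hgpos b hb, hab])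
      · exact absurd (by rw [← hab, hgpos a ha, Equiv.symm_apply_apply]; exact ha.symm)
          ((hgD b hb).2)
      · exact absurd (by rw [hab, hgpos b hb, Equiv.symm_apply_apply]; exact hb.symm)
          ((hgD a ha).2)
      · obtain ⟨ia, ja⟩ := a
        obtain ⟨ib, jb⟩ := b
        have h1 : ia = ib := by
          have ha1 := hg_fst ⟨ia, ja⟩
          have hb1 := hg_fst ⟨ib, jb⟩
          rw [hab] at ha1
          exact ha1.symm.trans hb1
        subst h1
        have he : (e ia) ⟨⟨ia, ja⟩, hmemC _ ha⟩ = (e ia) ⟨⟨ia, jb⟩, hmemC _ hb⟩ := by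
          apply Subtype.ext
          simpa only [g, dif_neg ha, dif_neg hb] using hab
        have := (e ia).injective he
        exact congrArg Subtype.val this
    -- the pointwise distance comparison
    have hkey : ∀ x, dist (S x) (S' (g x)) ≤ dist (S x) (S' (σ x)) := by
      intro x
      by_cases h : (σ x).1 = x.1
      · rw [hgpos x h]
      · have hji : (σ x).1 ≠ x.1 := h
        have hri : rsep t x.1 ≤ dist (t x.1) (t (σ x).1) := rsep_le t hji
        have hrj : rsep t (σ x).1 ≤ dist (t x.1) (t (σ x).1) := by
          rw [dist_comm]; exact rsep_le t (Ne.symm hji)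
        have h2 : dist (S' (g x)) (t x.1) < ε * rsep t x.1 := by
          have h' := hS' (g x); rwa [hg_fst x] at h'
        have h3 := hS x
        have h4 := hS' (σ x)
        have t1 : dist (S x) (S' (g x)) ≤ dist (S x) (t x.1) + dist (S' (g x)) (t x.1) :=
          dist_triangle_right _ _ _
        have t2 : dist (t x.1) (t (σ x).1)
            ≤ dist (S x) (t x.1) + dist (S x) (S' (σ x)) + dist (S' (σ x)) (t (σ x).1) := by
          calc dist (t x.1) (t (σ x).1)
              ≤ dist (t x.1) (S x) + dist (S x) (t (σ x).1) := dist_triangle _ _ _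
            _ ≤ dist (t x.1) (S x)
                + (dist (S x) (S' (σ x)) + dist (S' (σ x)) (t (σ x).1)) := by
                have := dist_triangle (S x) (S' (σ x)) (t (σ x).1); linarith
            _ = _ := by rw [dist_comm (t x.1)]; ring
        have hmul1 : ε * rsep t x.1 ≤ ε * dist (t x.1) (t (σ x).1) :=
          mul_le_mul_of_nonneg_left hri hε0.le
        have hmul2 : ε * rsep t (σ x).1 ≤ ε * dist (t x.1) (t (σ x).1) :=
          mul_le_mul_of_nonneg_left hrj hε0.le
        have hrpos := hr_pos x.1
        have hDpos : 0 < dist (t x.1) (t (σ x).1) := lt_of_lt_of_le hrpos hri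
        have hquarter : 4 * (ε * dist (t x.1) (t (σ x).1)) < dist (t x.1) (t (σ x).1) := by
          nlinarith
        linarith
    -- per-block permutations induced by g
    have key : ∀ i : Fin q,
        Gdist (fun j : Fin (Qi i) => S ⟨i, j⟩) (fun j : Fin (Qi i) => S' ⟨i, j⟩) ^ 2
          ≤ ∑ j : Fin (Qi i), dist (S ⟨i, j⟩) (S' (g ⟨i, j⟩)) ^ 2 := by
      intro i
      have hc : ∀ j : Fin (Qi i),
          (⟨i, Fin.cast (congrArg Qi (hg_fst ⟨i, j⟩)) (g ⟨i, j⟩).2⟩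
            : Σ i : Fin q, Fin (Qi i)) = g ⟨i, j⟩ := by
        intro j
        have h1 : (g ⟨i, j⟩).1 = i := hg_fst ⟨i, j⟩
        exact Sigma.ext h1.symm
          ((heq_fin_cast (congrArg Qi (hg_fst ⟨i, j⟩)) (g ⟨i, j⟩).2).symm)
      have hcinj : Function.Injective
          (fun j : Fin (Qi i) => Fin.cast (congrArg Qi (hg_fst ⟨i, j⟩)) (g ⟨i, j⟩).2) := by
        intro j j' hjj
        have h1 : (⟨i, Fin.cast (congrArg Qi (hg_fst ⟨i, j⟩)) (g ⟨i, j⟩).2⟩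
            : Σ i : Fin q, Fin (Qi i))
            = ⟨i, Fin.cast (congrArg Qi (hg_fst ⟨i, j'⟩)) (g ⟨i, j'⟩).2⟩ :=
          congrArg (fun v => (⟨i, v⟩ : Σ i : Fin q, Fin (Qi i))) hjj
        rw [hc j, hc j'] at h1
        have h2 := hg_inj h1
        simpa using h2
      have hsle := Gdist_sq_le (fun j : Fin (Qi i) => S ⟨i, j⟩) (fun j : Fin (Qi i) => S' ⟨i, j⟩)
        (Equiv.ofBijective _ (Finite.injective_iff_bijective.mp hcinj))
      refine hsle.trans (le_of_eq (Finset.sum_congr rfl fun j _ => ?_))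
      exact congrArg (fun z : Σ i : Fin q, Fin (Qi i) => dist (S ⟨i, j⟩) (S' z) ^ 2) (hc j)
    clear_value g e
    -- assemble
    calc ∑ i : Fin q,
          Gdist (fun j : Fin (Qi i) => S ⟨i, j⟩) (fun j : Fin (Qi i) => S' ⟨i, j⟩) ^ 2
        ≤ ∑ i : Fin q, ∑ j : Fin (Qi i), dist (S ⟨i, j⟩) (S' (g ⟨i, j⟩)) ^ 2 :=
          Finset.sum_le_sum fun i _ => key i
      _ = ∑ x : Σ i : Fin q, Fin (Qi i), dist (S x) (S' (g x)) ^ 2 := by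
          rw [hsum]
      _ ≤ ∑ x : Σ i : Fin q, Fin (Qi i), dist (S x) (S' (σ x)) ^ 2 :=
          Finset.sum_le_sum fun x _ => pow_le_pow_left₀ dist_nonneg (hkey x) 2
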